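/- Let (G,μ) be a countable measured groupoid with a proper real conditionally negative definite function ψ (ν({ψ ≤ c}) < ∞ for all c > 0). Setting F_n = exp(−ψ/n), the sequence (F_n) consists of positive definite functions with F_n = 1 on units, F_n → 1 pointwise, and ν({|F_n| > ε}) < ∞ for every ε > 0 and every n. Hence (G,μ) has the Haagerup property. -/

import Mathlib

/-!
Schoenberg's argument. If `ψ` is conditionally negative definite, then for arrows `γᵢ` with a
common range the real kernel `ψ(γ₀⁻¹γᵢ) + ψ(γ₀⁻¹γⱼ) - ψ(γᵢ⁻¹γⱼ) - ψ(γ₀⁻¹γ₀)` is positive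
semidefinite, hence so is its entrywise exponential (Schur product theorem and the exponential
series), and `exp(-ψ(γᵢ⁻¹γⱼ)/t)` is obtained from it by a diagonal congruence with positive
weights. Properness of `ψ` gives `ν({exp(-ψ/t) > ε}) < ∞`, since
`exp(-ψ/t) > ε ↔ ψ < -t log ε`, and `exp(-ψ/t) → 1` pointwise as `t → ∞`.
-/

open MeasureTheory ENNReal Filter Topology
open scoped ComplexOrder

/-- A discrete (countable) groupoid, given algebraically: a type `E` of arrows over a
unit space `X`, with range `r`, source `s`, a (total) partial multiplication `mul`
(only constrained on composable pairs), inversion, and countable source fibres. -/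
structure CountableGroupoid where
  E : Type
  X : Type
  r : E → X
  s : E → X
  unit : X → E
  mul : E → E → E
  inv : E → E
  r_unit : ∀ x, r (unit x) = x
  s_unit : ∀ x, s (unit x) = x
  mul_assoc' : ∀ a b c, s a = r b → s b = r c → mul (mul a b) c = mul a (mul b c)
  r_mul : ∀ a b, s a = r b → r (mul a b) = r a
  s_mul : ∀ a b, s a = r b → s (mul a b) = s b
  unit_mul : ∀ a, mul (unit (r a)) a = a
  mul_unit : ∀ a, mul a (unit (s a)) = a
  r_inv : ∀ a, r (inv a) = s a
  s_inv : ∀ a, s (inv a) = r a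
  mul_inv : ∀ a, mul a (inv a) = unit (r a)
  inv_mul : ∀ a, mul (inv a) a = unit (s a)
  countable_fibers : ∀ x, {γ : E | s γ = x}.Countable

namespace CountableGroupoid

variable (G : CountableGroupoid)

/-- Sum of a nonnegative function over the source fibre `G_x = s⁻¹(x)`. -/
noncomputable def sFiberSum (f : G.E → ℝ≥0∞) (x : G.X) : ℝ≥0∞ :=
  ∑' γ : {γ : G.E // G.s γ = x}, f γ.1

/-- Sum of a nonnegative function over the range fibre `G^x = r⁻¹(x)`. -/
noncomputable def rFiberSum (f : G.E → ℝ≥0∞) (x : G.X) : ℝ≥0∞ :=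
  ∑' γ : {γ : G.E // G.r γ = x}, f γ.1

/-- The `I`-norm : `max (ess sup_x Σ_{r γ = x} |f γ|, ess sup_x Σ_{s γ = x} |f γ|)`. -/
noncomputable def Inorm [MeasurableSpace G.X] (μ : Measure G.X) (f : G.E → ℂ) : ℝ≥0∞ :=
  max (essSup (fun x => G.rFiberSum (fun γ => (‖f γ‖₊ : ℝ≥0∞)) x) μ)
      (essSup (fun x => G.sFiberSum (fun γ => (‖f γ‖₊ : ℝ≥0∞)) x) μ)

/-- The factorizations `γ = γ₁ γ₂` of an arrow `γ`. -/
def Factorizations (γ : G.E) : Type :=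
  {p : G.E × G.E // G.s p.1 = G.r p.2 ∧ G.mul p.1 p.2 = γ}

/-- Convolution product `(f*g)(γ) = Σ_{γ₁γ₂ = γ} f(γ₁) g(γ₂)`. -/
noncomputable def conv (f g : G.E → ℂ) (γ : G.E) : ℂ :=
  ∑' p : G.Factorizations γ, f p.1.1 * g p.1.2

/-- Involution `f^*(γ) = conj (f (γ⁻¹))`. -/
noncomputable def starF (f : G.E → ℂ) (γ : G.E) : ℂ := (starRingEnd ℂ) (f (G.inv γ))

/-- The measure `ν` on `G` induced by `μ`: `ν(A) = ∫_X #(A ∩ s⁻¹ x) dμ(x)`. -/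
noncomputable def nuSet [MeasurableSpace G.X] (μ : Measure G.X) (A : Set G.E) : ℝ≥0∞ :=
  ∫⁻ x, (∑' _γ : ↥(A ∩ {γ : G.E | G.s γ = x}), (1 : ℝ≥0∞)) ∂μ

/-- Positive definiteness of a function on a groupoid. -/
def IsPosDef (F : G.E → ℂ) : Prop :=
  ∀ (x : G.X) (n : ℕ) (γ : Fin n → G.E), (∀ i, G.r (γ i) = x) →
    ∀ lam : Fin n → ℂ,
      0 ≤ ∑ i, ∑ j, lam i * (starRingEnd ℂ) (lam j) * F (G.mul (G.inv (γ i)) (γ j))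

/-- Real conditionally negative definite functions on a groupoid. -/
def IsCondNegDef (ψ : G.E → ℝ) : Prop :=
  (∀ x, ψ (G.unit x) = 0) ∧ (∀ γ, ψ (G.inv γ) = ψ γ) ∧
  (∀ (x : G.X) (n : ℕ) (γ : Fin n → G.E), (∀ i, G.r (γ i) = x) →
    ∀ lam : Fin n → ℝ, (∑ i, lam i) = 0 →
      (∑ i, ∑ j, lam i * lam j * ψ (G.mul (G.inv (γ i)) (γ j))) ≤ 0)

/-- `Q^n` : products of `n` elements of `Q` (with `Q^0` the units). -/
def Qpow (Q : Set G.E) : ℕ → Set G.E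
  | 0 => Set.range G.unit
  | n+1 => {γ : G.E | ∃ a ∈ Q, ∃ b ∈ Qpow Q n, G.s a = G.r b ∧ γ = G.mul a b}

/-- A reduced composable chain of elements of `Q` (no backtracking). -/
def IsReducedChain (Q : Set G.E) : List G.E → Prop
  | [] => True
  | [a] => a ∈ Q
  | a :: b :: l => a ∈ Q ∧ G.s a = G.r b ∧ b ≠ G.inv a ∧ IsReducedChain Q (b :: l)

/-- A treeing: a symmetric generating set disjoint from the units such that each fibre
graph is a tree (no nontrivial reduced loops). -/
def IsTreeing (Q : Set G.E) : Prop :=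
  (∀ γ ∈ Q, G.inv γ ∈ Q) ∧
  (∀ x, G.unit x ∉ Q) ∧
  (∀ γ : G.E, ∃ n, γ ∈ G.Qpow Q n) ∧
  (∀ (a : G.E) (l : List G.E), G.IsReducedChain Q (a :: l) →
      List.foldl G.mul a l ≠ G.unit (G.r a))

/-- The length function `ψ(γ) = d_{r γ}(r γ, γ) = min {n | γ ∈ Q^n}`. -/
noncomputable def treeDist (Q : Set G.E) (γ : G.E) : ℝ :=
  ((sInf {n : ℕ | γ ∈ G.Qpow Q n} : ℕ) : ℝ)

/-- The `A = L^∞(X)`-valued inner product `⟨ξ,η⟩_A(x) = Σ_{s γ = x} conj (ξ γ) η γ`. -/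
noncomputable def innerA (ξ η : G.E → ℂ) (x : G.X) : ℂ :=
  ∑' γ : {γ : G.E // G.s γ = x}, (starRingEnd ℂ) (ξ γ.1) * η γ.1

/-- The Haagerup property for a countable measured groupoid. -/
def HaagerupProperty [MeasurableSpace G.X] (μ : Measure G.X) : Prop :=
  ∃ F : ℕ → G.E → ℂ,
    (∀ n, G.IsPosDef (F n)) ∧
    (∀ n, ∀ᵐ x ∂μ, F n (G.unit x) = 1) ∧
    (∀ n, ∀ ε : ℝ, 0 < ε → G.nuSet μ {γ : G.E | ε < ‖F n γ‖} < ⊤) ∧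
    G.nuSet μ {γ : G.E | ¬ Tendsto (fun n => F n γ) atTop (nhds (1 : ℂ))} = 0

end CountableGroupoid

namespace Matrix


variable {ι 𝕜 : Type*} [Fintype ι] [RCLike 𝕜]

theorem PosSemidef.map_pow {A : Matrix ι ι 𝕜} (hA : A.PosSemidef) :
    ∀ m : ℕ, (A.map (· ^ m)).PosSemidef
  | 0 => by
    simpa [vecMulVec, map, Matrix.of] using posSemidef_vecMulVec_self_star (fun _ : ι => (1 : 𝕜))
  | m + 1 => by
    convert (hA.map_pow m).hadamard hA using 1
    ext i j
    simp [pow_succ]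

theorem PosSemidef.of_hasSum {f : ℕ → Matrix ι ι 𝕜} {S : Matrix ι ι 𝕜} (hf : HasSum f S)
    (h : ∀ m, (f m).PosSemidef) : S.PosSemidef := by
  refine .of_dotProduct_mulVec_nonneg ?_ fun x => ?_
  · refine hf.matrix_conjTranspose.unique ?_
    simpa only [(h _).isHermitian.eq] using hf
  · let q : Matrix ι ι 𝕜 →+ 𝕜 :=
      { toFun := fun M => star x ⬝ᵥ M *ᵥ x
        map_zero' := by simp
        map_add' := by simp [add_mulVec, dotProduct_add] }
    have hq : Continuous q :=
      continuous_const.dotProduct (continuous_id.matrix_mulVec continuous_const)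
    exact (hf.map q hq).nonneg fun m => (h m).dotProduct_mulVec_nonneg x

theorem PosSemidef.map_exp {A : Matrix ι ι ℂ} (hA : A.PosSemidef) :
    (A.map Complex.exp).PosSemidef := by
  refine .of_hasSum (f := fun m => ((m.factorial : ℂ)⁻¹) • A.map (· ^ m)) ?_
    fun m => (hA.map_pow m).smul (by positivity)
  refine Pi.hasSum.2 fun i => Pi.hasSum.2 fun j => ?_
  simpa [Complex.exp_eq_exp_ℂ, div_eq_inv_mul] using NormedSpace.expSeries_div_hasSum_exp (A i j)

theorem PosSemidef.map_ofReal {A : Matrix ι ι ℝ} (hA : A.PosSemidef) :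
    (A.map ((↑) : ℝ → ℂ)).PosSemidef := by
  classical
  open scoped MatrixOrder in
  obtain ⟨B, hB⟩ : ∃ B : Matrix ι ι ℝ, A = Bᴴ * B :=
    ⟨CFC.sqrt A, by
      rw [← star_eq_conjTranspose, (CFC.sqrt_nonneg A).isSelfAdjoint.star_eq,
        CFC.sqrt_mul_sqrt_self A hA.nonneg]⟩
  have : A.map Complex.ofRealHom = (B.map Complex.ofRealHom)ᴴ * B.map Complex.ofRealHom := by
    rw [hB, Matrix.map_mul,
      conjTranspose_map (⇑Complex.ofRealHom) fun _ => (Complex.conj_ofReal _).symm]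
  exact this ▸ posSemidef_conjTranspose_mul_self _

def IsCondNegDef (Φ : Matrix ι ι ℝ) : Prop :=
  Φ.IsSymm ∧ ∀ c : ι → ℝ, ∑ i, c i = 0 → c ⬝ᵥ Φ *ᵥ c ≤ 0

theorem IsCondNegDef.posSemidef_centered {Φ : Matrix ι ι ℝ} (hΦ : Φ.IsCondNegDef) (o : ι) :
    (of fun i j => Φ o i + Φ o j - Φ i j - Φ o o).PosSemidef := by
  classical
  have hsymm : ∀ i j, Φ j i = Φ i j := fun i j => hΦ.1.apply i j
  refine .of_dotProduct_mulVec_nonneg ?_ fun c => ?_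
  · refine IsHermitian.ext fun i j => ?_
    simp only [of_apply, star_trivial, hsymm]
    ring
  set S := ∑ i, c i
  have hc := hΦ.2 (c - Pi.single o S) (by simp [S])
  have key : star c ⬝ᵥ (of fun i j => Φ o i + Φ o j - Φ i j - Φ o o) *ᵥ c
      = -((c - Pi.single o S) ⬝ᵥ Φ *ᵥ (c - Pi.single o S)) := by
    simp only [dotProduct, mulVec, of_apply, star_trivial, Pi.sub_apply, Pi.single_apply,
      sub_mul, mul_sub, Finset.sum_sub_distrib, mul_ite, ite_mul, mul_zero, zero_mul,
      Finset.sum_ite_eq', Finset.mem_univ, if_true]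
    simp only [add_mul, mul_add, Finset.sum_add_distrib, Finset.mul_sum, Finset.sum_mul, hsymm, S]
    rw [Finset.sum_comm (f := fun x i => c i * (Φ o x * c x)),
      Finset.sum_comm (f := fun x i => c i * (Φ o o * c x))]
    ring
  linarith

theorem IsCondNegDef.posSemidef_exp_neg_div {Φ : Matrix ι ι ℝ} (hΦ : Φ.IsCondNegDef) {t : ℝ}
    (ht : 0 ≤ t) : (of fun i j => ((Real.exp (-Φ i j / t) : ℝ) : ℂ)).PosSemidef := by
  rcases isEmpty_or_nonempty ι with hι | ⟨⟨o⟩⟩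
  · rw [Subsingleton.elim (α := Matrix ι ι ℂ) (of _) 0]
    exact .zero
  set d : ι → ℂ := fun i => ((Real.exp ((Φ o o / 2 - Φ o i) / t) : ℝ) : ℂ)
  have hexp := (((hΦ.posSemidef_centered o).smul (inv_nonneg.2 ht)).map_ofReal).map_exp
  have hfactor : (of fun i j => ((Real.exp (-Φ i j / t) : ℝ) : ℂ)) = vecMulVec d (star d) ⊙
      (((t⁻¹ • of fun i j => Φ o i + Φ o j - Φ i j - Φ o o).map (↑)).map Complex.exp) := by
    ext i j
    simp only [d, of_apply, hadamard_apply, vecMulVec_apply, map_apply, smul_apply, smul_eq_mul,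
      Pi.star_apply, Complex.star_def, Complex.conj_ofReal, ← Complex.ofReal_exp,
      ← Complex.ofReal_mul, ← Real.exp_add]
    ring_nf
  rw [hfactor]
  exact (posSemidef_vecMulVec_self_star d).hadamard hexp

end Matrix

theorem Real.lt_exp_neg_div_iff {ε t a : ℝ} (hε : 0 < ε) (ht : 0 < t) :
    ε < Real.exp (-a / t) ↔ a < -(t * Real.log ε) := by
  rw [← log_lt_iff_lt_exp hε, lt_div_iff₀ ht]
  constructor <;> intro h <;> linarith

theorem tendsto_exp_neg_div_succ (a : ℝ) :
    Tendsto (fun n : ℕ => ((Real.exp (-a / ((n : ℝ) + 1)) : ℝ) : ℂ)) atTop (𝓝 1) := by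
  have hdiv : Tendsto (fun n : ℕ => -a / ((n : ℝ) + 1)) atTop (𝓝 0) :=
    tendsto_const_nhds.div_atTop (tendsto_atTop_add_const_right _ 1 tendsto_natCast_atTop_atTop)
  simpa [Function.comp_def] using
    ((Complex.continuous_ofReal.comp Real.continuous_exp).tendsto 0).comp hdiv

namespace CountableGroupoid

variable (G : CountableGroupoid)

theorem mul_left_cancel {c d d' : G.E} (hd : G.s c = G.r d) (hd' : G.s c = G.r d')
    (h : G.mul c d = G.mul c d') : d = d' := by
  have cancel : ∀ e, G.s c = G.r e → G.mul (G.inv c) (G.mul c e) = e := fun e he => by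
    rw [← G.mul_assoc' _ _ _ (G.s_inv c) he, G.inv_mul, he, G.unit_mul]
  rw [← cancel d hd, ← cancel d' hd', h]

theorem inv_inv (a : G.E) : G.inv (G.inv a) = a := by
  refine (G.mul_left_cancel (G.s_inv a) (by rw [G.r_inv]) ?_).symm
  rw [G.inv_mul, G.mul_inv, G.r_inv]

theorem inv_mul_rev {a b : G.E} (hab : G.s a = G.r b) :
    G.inv (G.mul a b) = G.mul (G.inv b) (G.inv a) := by
  have hbi : G.s (G.inv b) = G.r (G.inv a) := by rw [G.s_inv, G.r_inv, hab]
  have hrm : G.r (G.mul (G.inv b) (G.inv a)) = G.s b := by rw [G.r_mul _ _ hbi, G.r_inv]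
  refine G.mul_left_cancel (G.r_inv _).symm (by rw [G.s_mul _ _ hab, hrm]) ?_
  rw [G.mul_inv, G.mul_assoc' a b _ hab (by rw [hrm]),
    ← G.mul_assoc' b (G.inv b) (G.inv a) (G.r_inv b).symm hbi,
    G.mul_inv b, ← hab, ← G.r_inv a, G.unit_mul, G.mul_inv a, G.r_mul _ _ hab]

variable {G}

theorem IsCondNegDef.matrix_isCondNegDef {ψ : G.E → ℝ} (hψ : G.IsCondNegDef ψ) {x : G.X}
    {n : ℕ} {γ : Fin n → G.E} (hγ : ∀ i, G.r (γ i) = x) :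
    (Matrix.of fun i j => ψ (G.mul (G.inv (γ i)) (γ j))).IsCondNegDef := by
  refine ⟨Matrix.IsSymm.ext fun i j => ?_, fun c hc => ?_⟩
  · have hcomp : G.s (G.inv (γ j)) = G.r (γ i) := by rw [G.s_inv, hγ i, hγ j]
    simp only [Matrix.of_apply]
    rw [← hψ.2.1, G.inv_mul_rev hcomp, G.inv_inv]
  · simpa [dotProduct, Matrix.mulVec, Finset.mul_sum, mul_assoc, mul_comm, mul_left_comm] using
      hψ.2.2 x n γ hγ c hc

theorem isPosDef_of_forall_posSemidef {F : G.E → ℂ}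
    (hF : ∀ (x : G.X) (n : ℕ) (γ : Fin n → G.E), (∀ i, G.r (γ i) = x) →
      (Matrix.of fun i j => F (G.mul (G.inv (γ i)) (γ j))).PosSemidef) :
    G.IsPosDef F := by
  intro x n γ hγ lam
  simpa [dotProduct, Matrix.mulVec, Finset.mul_sum, mul_comm, mul_left_comm] using
    (hF x n γ hγ).dotProduct_mulVec_nonneg (star lam)

theorem IsCondNegDef.isPosDef_exp_neg_div {ψ : G.E → ℝ} (hψ : G.IsCondNegDef ψ) {t : ℝ}
    (ht : 0 ≤ t) : G.IsPosDef fun γ => ((Real.exp (-ψ γ / t) : ℝ) : ℂ) :=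
  G.isPosDef_of_forall_posSemidef fun _ _ _ hγ =>
    (hψ.matrix_isCondNegDef hγ).posSemidef_exp_neg_div ht

variable (G) [MeasurableSpace G.X] (μ : Measure G.X)

theorem nuSet_mono {A B : Set G.E} (h : A ⊆ B) : G.nuSet μ A ≤ G.nuSet μ B :=
  lintegral_mono fun _ => ENNReal.tsum_mono_subtype (fun _ => 1) (Set.inter_subset_inter_left _ h)

theorem nuSet_empty : G.nuSet μ ∅ = 0 := by
  simp [nuSet]

variable {G μ}

theorem nuSet_lt_exp_neg_div_lt_top {ψ : G.E → ℝ}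
    (hproper : ∀ c : ℝ, 0 < c → G.nuSet μ {γ : G.E | ψ γ ≤ c} < ⊤) {t ε : ℝ} (ht : 0 < t)
    (hε : 0 < ε) : G.nuSet μ {γ : G.E | ε < ‖((Real.exp (-ψ γ / t) : ℝ) : ℂ)‖} < ⊤ := by
  refine (G.nuSet_mono μ fun γ hγ => ?_).trans_lt
    (hproper (max 1 (-(t * Real.log ε))) (lt_max_of_lt_left one_pos))
  simp only [Complex.norm_real, Real.norm_eq_abs, Real.abs_exp] at hγ ⊢
  exact ((Real.lt_exp_neg_div_iff hε ht).1 hγ).le.trans (le_max_right 1 _)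

end CountableGroupoid

theorem proper_condNegDef_implies_haagerup_general (G : CountableGroupoid)
    [MeasurableSpace G.X] (μ : Measure G.X)
    (ψ : G.E → ℝ) (hψ : G.IsCondNegDef ψ)
    (hproper : ∀ c : ℝ, 0 < c → G.nuSet μ {γ : G.E | ψ γ ≤ c} < ⊤) :
    (∀ n : ℕ, G.IsPosDef fun γ => ((Real.exp (-(ψ γ) / ((n : ℝ) + 1)) : ℝ) : ℂ)) ∧
    (∀ (n : ℕ) (x : G.X), ((Real.exp (-(ψ (G.unit x)) / ((n : ℝ) + 1)) : ℝ) : ℂ) = 1) ∧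
    (∀ (n : ℕ) (ε : ℝ), 0 < ε →
      G.nuSet μ {γ : G.E | ε < ‖((Real.exp (-(ψ γ) / ((n : ℝ) + 1)) : ℝ) : ℂ)‖} < ⊤) ∧
    (∀ γ : G.E, Tendsto (fun n : ℕ => ((Real.exp (-(ψ γ) / ((n : ℝ) + 1)) : ℝ) : ℂ))
      atTop (nhds 1)) ∧
    G.HaagerupProperty μ := by
  have hpos (n : ℕ) := hψ.isPosDef_exp_neg_div (t := (n : ℝ) + 1) (by positivity)
  have hunit (n : ℕ) (x : G.X) : ((Real.exp (-(ψ (G.unit x)) / ((n : ℝ) + 1)) : ℝ) : ℂ) = 1 := by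
    simp [hψ.1 x]
  have hfin (n : ℕ) (ε : ℝ) (hε : 0 < ε) :=
    CountableGroupoid.nuSet_lt_exp_neg_div_lt_top hproper (t := (n : ℝ) + 1) (by positivity) hε
  have htend γ := tendsto_exp_neg_div_succ (ψ γ)
  refine ⟨hpos, hunit, hfin, htend, _, hpos, fun n => .of_forall (hunit n), hfin, ?_⟩
  convert G.nuSet_empty μ
  exact Set.eq_empty_of_forall_notMem fun γ hγ => hγ (htend γ)

/-- a proper conditionally negative definite function `ψ` yields, via
`F_n = exp(−ψ/n)`, a sequence of positive definite functions equal to `1` on units,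
with `ν({|F_n| > ε}) < ∞` and `F_n → 1` pointwise; hence `(G,μ)` has the Haagerup
property. -/
theorem proper_condNegDef_implies_haagerup (G : CountableGroupoid)
    [MeasurableSpace G.X] (μ : Measure G.X) [IsProbabilityMeasure μ]
    (ψ : G.E → ℝ) (hψ : G.IsCondNegDef ψ)
    (hproper : ∀ c : ℝ, 0 < c → G.nuSet μ {γ : G.E | ψ γ ≤ c} < ⊤) :
    (∀ n : ℕ, G.IsPosDef fun γ => ((Real.exp (-(ψ γ) / ((n : ℝ) + 1)) : ℝ) : ℂ)) ∧
    (∀ (n : ℕ) (x : G.X), ((Real.exp (-(ψ (G.unit x)) / ((n : ℝ) + 1)) : ℝ) : ℂ) = 1) ∧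
    (∀ (n : ℕ) (ε : ℝ), 0 < ε →
      G.nuSet μ {γ : G.E | ε < ‖((Real.exp (-(ψ γ) / ((n : ℝ) + 1)) : ℝ) : ℂ)‖} < ⊤) ∧
    (∀ γ : G.E, Tendsto (fun n : ℕ => ((Real.exp (-(ψ γ) / ((n : ℝ) + 1)) : ℝ) : ℂ))
      atTop (nhds 1)) ∧
    G.HaagerupProperty μ :=
  proper_condNegDef_implies_haagerup_general G μ ψ hψ hproper
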